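/- arXiv:1012.4058 — 5 statements merged into one kernel-verified Lean document; each statement's English description precedes it below -/
import Mathlib

section
/- Let f : ℕ → ℚ satisfy f(1) = 0, and for every k ≥ 1, f(2k) = f(2k−1) + 3(3k² − 5k + 2) and f(2k+1) = f(2k) + 3(3k² − 2k). Then for every k ≥ 0, f(2k+1) = (3/2)(4k³ − k² − k), and for every k ≥ 1, f(2k) = (3/2)(4k³ − 7k² + 3k). -/
/-!
Each recurrence increment factors: the step `2k+1 → 2k+2` adds `3k(3k+1)` and the step
`2k+2 → 2k+3` adds `3(k+1)(3k+1)`. Hence the odd-indexed values grow by `3(2k+1)(3k+1)`,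
which is exactly the forward difference of `3/2 (4k³ - k² - k)`; the even-indexed values are
then one step away from the odd ones.
-/

section
variable {f : ℕ → ℚ}

lemma pentagon_f_even_step
    (heven : ∀ k : ℕ, 1 ≤ k →
      f (2 * k) = f (2 * k - 1) + 3 * (3 * (k : ℚ) ^ 2 - 5 * k + 2)) (k : ℕ) :
    f (2 * k + 2) = f (2 * k + 1) + 3 * k * (3 * k + 1) := by
  have h := heven (k + 1) k.succ_pos
  rw [show 2 * (k + 1) - 1 = 2 * k + 1 by omega] at h
  rw [show 2 * k + 2 = 2 * (k + 1) by ring, h]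
  push_cast
  ring

lemma pentagon_f_odd_step
    (hodd : ∀ k : ℕ, 1 ≤ k →
      f (2 * k + 1) = f (2 * k) + 3 * (3 * (k : ℚ) ^ 2 - 2 * k)) (k : ℕ) :
    f (2 * k + 3) = f (2 * k + 2) + 3 * (k + 1) * (3 * k + 1) := by
  rw [show 2 * k + 3 = 2 * (k + 1) + 1 by ring, hodd (k + 1) k.succ_pos,
    show 2 * (k + 1) = 2 * k + 2 by ring]
  push_cast
  ring

lemma pentagon_f_odd_closed_form (h1 : f 1 = 0)
    (heven : ∀ k : ℕ, 1 ≤ k →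
      f (2 * k) = f (2 * k - 1) + 3 * (3 * (k : ℚ) ^ 2 - 5 * k + 2))
    (hodd : ∀ k : ℕ, 1 ≤ k →
      f (2 * k + 1) = f (2 * k) + 3 * (3 * (k : ℚ) ^ 2 - 2 * k)) (k : ℕ) :
    f (2 * k + 1) = 3 / 2 * (4 * (k : ℚ) ^ 3 - k ^ 2 - k) := by
  induction k with
  | zero => simpa using h1
  | succ k ih =>
    rw [show 2 * (k + 1) + 1 = 2 * k + 3 by ring, pentagon_f_odd_step hodd,
      pentagon_f_even_step heven, ih]
    push_cast
    ring

lemma pentagon_f_even_closed_form (h1 : f 1 = 0)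
    (heven : ∀ k : ℕ, 1 ≤ k →
      f (2 * k) = f (2 * k - 1) + 3 * (3 * (k : ℚ) ^ 2 - 5 * k + 2))
    (hodd : ∀ k : ℕ, 1 ≤ k →
      f (2 * k + 1) = f (2 * k) + 3 * (3 * (k : ℚ) ^ 2 - 2 * k)) (k : ℕ) (hk : 1 ≤ k) :
    f (2 * k) = 3 / 2 * (4 * (k : ℚ) ^ 3 - 7 * k ^ 2 + 3 * k) := by
  obtain ⟨m, rfl⟩ : ∃ m, k = m + 1 := ⟨k - 1, by omega⟩
  rw [show 2 * (m + 1) = 2 * m + 2 by ring, pentagon_f_even_step heven,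
    pentagon_f_odd_closed_form h1 heven hodd]
  push_cast
  ring

end

/-- the sequence `f` (number of convex pentagons in an `n`-triangular
net with vertices on both of two fixed sides) defined by the interleaved
first-order recurrences has the stated closed forms. -/
theorem pentagon_f_closed_form (f : ℕ → ℚ)
    (h1 : f 1 = 0)
    (heven : ∀ k : ℕ, 1 ≤ k →
      f (2 * k) = f (2 * k - 1) + 3 * (3 * (k : ℚ) ^ 2 - 5 * k + 2))
    (hodd : ∀ k : ℕ, 1 ≤ k →
      f (2 * k + 1) = f (2 * k) + 3 * (3 * (k : ℚ) ^ 2 - 2 * k)) :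
    (∀ k : ℕ, f (2 * k + 1) = 3 / 2 * (4 * (k : ℚ) ^ 3 - k ^ 2 - k)) ∧
    (∀ k : ℕ, 1 ≤ k → f (2 * k) = 3 / 2 * (4 * (k : ℚ) ^ 3 - 7 * k ^ 2 + 3 * k)) :=
  ⟨pentagon_f_odd_closed_form h1 heven hodd, pentagon_f_even_closed_form h1 heven hodd⟩
end

section
/- Let f : ℕ → ℚ be defined by f(2k+1) = (3/2)(4k³ − k² − k) for k ≥ 0 and f(2k) = (3/2)(4k³ − 7k² + 3k) for k ≥ 1, and let P : ℕ → ℚ satisfy P(1) = 0, P(2) = 0, and P(n) = 2P(n−1) − P(n−2) + f(n) for all n ≥ 3. Then for every k ≥ 1, P(2k+1) − P(2k) = 3k⁴ + 2k³ − (3/2)k² − (1/2)k and P(2k) − P(2k−1) = 3k⁴ − 4k³ + k. -/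
/-!
The recurrence says that the first differences `P n - P (n - 1)` have increments `f n`, so they
are the partial sums of `f` starting from `P 2 - P 1 = 0`. Adding the two cubic branches of `f`
alternately to the claimed quartics reproduces the next quartic, which gives both closed forms
by one induction on `k`.
-/

theorem sub_eq_sub_add_of_recurrence {R : Type*} [Ring R] {f P : ℕ → R}
    (hPrec : ∀ n : ℕ, 3 ≤ n → P n = 2 * P (n - 1) - P (n - 2) + f n) {n : ℕ} (hn : 2 ≤ n) :
    P (n + 1) - P n = P n - P (n - 1) + f (n + 1) := by
  rw [hPrec (n + 1) (by omega), Nat.add_sub_cancel, show n + 1 - 2 = n - 1 by omega, two_mul]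
  abel

section PentagonDifferences

variable {f P : ℕ → ℚ}

theorem pentagon_odd_difference
    (hf_odd : ∀ k : ℕ, f (2 * k + 1) = 3 / 2 * (4 * (k : ℚ) ^ 3 - k ^ 2 - k))
    (hPrec : ∀ n : ℕ, 3 ≤ n → P n = 2 * P (n - 1) - P (n - 2) + f n) {k : ℕ} (hk : 1 ≤ k)
    (heven : P (2 * k) - P (2 * k - 1) = 3 * (k : ℚ) ^ 4 - 4 * k ^ 3 + k) :
    P (2 * k + 1) - P (2 * k) = 3 * (k : ℚ) ^ 4 + 2 * k ^ 3 - 3 / 2 * k ^ 2 - 1 / 2 * k := by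
  rw [sub_eq_sub_add_of_recurrence hPrec (by omega), heven, hf_odd]
  ring

theorem pentagon_even_difference
    (hf_odd : ∀ k : ℕ, f (2 * k + 1) = 3 / 2 * (4 * (k : ℚ) ^ 3 - k ^ 2 - k))
    (hf_even : ∀ k : ℕ, 1 ≤ k → f (2 * k) = 3 / 2 * (4 * (k : ℚ) ^ 3 - 7 * k ^ 2 + 3 * k))
    (hP1 : P 1 = 0) (hP2 : P 2 = 0)
    (hPrec : ∀ n : ℕ, 3 ≤ n → P n = 2 * P (n - 1) - P (n - 2) + f n) {k : ℕ} (hk : 1 ≤ k) :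
    P (2 * k) - P (2 * k - 1) = 3 * (k : ℚ) ^ 4 - 4 * k ^ 3 + k := by
  induction k, hk using Nat.le_induction with
  | base => norm_num [hP1, hP2]
  | succ k hk ih =>
    have hodd := pentagon_odd_difference hf_odd hPrec hk ih
    have hstep := sub_eq_sub_add_of_recurrence hPrec (n := 2 * k + 1) (by omega)
    rw [show 2 * k + 1 + 1 = 2 * (k + 1) by ring, show 2 * k + 1 - 1 = 2 * k by omega] at hstep
    rw [show 2 * (k + 1) - 1 = 2 * k + 1 by omega, hstep, hodd, hf_even (k + 1) (by omega)]
    push_cast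
    ring

end PentagonDifferences

/-- with the closed-form inhomogeneous term `f`, the pentagon-counting
sequence `P` satisfying `P n = 2 P (n-1) - P (n-2) + f n` has the stated
consecutive differences. -/
theorem pentagon_P_differences (f P : ℕ → ℚ)
    (hf_odd : ∀ k : ℕ, f (2 * k + 1) = 3 / 2 * (4 * (k : ℚ) ^ 3 - k ^ 2 - k))
    (hf_even : ∀ k : ℕ, 1 ≤ k → f (2 * k) = 3 / 2 * (4 * (k : ℚ) ^ 3 - 7 * k ^ 2 + 3 * k))
    (hP1 : P 1 = 0) (hP2 : P 2 = 0)
    (hPrec : ∀ n : ℕ, 3 ≤ n → P n = 2 * P (n - 1) - P (n - 2) + f n) :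
    (∀ k : ℕ, 1 ≤ k →
      P (2 * k + 1) - P (2 * k) =
        3 * (k : ℚ) ^ 4 + 2 * k ^ 3 - 3 / 2 * k ^ 2 - 1 / 2 * k) ∧
    (∀ k : ℕ, 1 ≤ k →
      P (2 * k) - P (2 * k - 1) = 3 * (k : ℚ) ^ 4 - 4 * k ^ 3 + k) := by
  have heven := fun k (hk : 1 ≤ k) => pentagon_even_difference hf_odd hf_even hP1 hP2 hPrec hk
  exact ⟨fun k hk => pentagon_odd_difference hf_odd hPrec hk (heven k hk), heven⟩
end

section
/- Let f : ℕ → ℚ be defined by f(2k+1) = (3/2)(4k³ − k² − k) for k ≥ 0 and f(2k) = (3/2)(4k³ − 7k² + 3k) for k ≥ 1, and let P : ℕ → ℚ satisfy P(1) = 0, P(2) = 0, and P(n) = 2P(n−1) − P(n−2) + f(n) for all n ≥ 3. Then for every k ≥ 0, P(2k+1) = (6/5)k⁵ + (5/2)k⁴ + (1/2)k³ − k² − (1/5)k, and for every k ≥ 1, P(2k) = (6/5)k⁵ − (1/2)k⁴ − (3/2)k³ + (1/2)k² + (3/10)k. -/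
/-!
The second difference of `P` is `f`, and `P` is determined by this recurrence together with
`P 1` and `P 2`. The two quintics, read at `n = 2k + 1` and `n = 2k`, satisfy the same
recurrence (a polynomial identity in `k` for each parity of `n`) and vanish at `n = 1, 2`,
so they agree with `P`.
-/

theorem eq_of_two_step_recurrence {α : Type*} (F : ℕ → α → α → α) {u v : ℕ → α}
    (hu : ∀ n, 3 ≤ n → u n = F n (u (n - 1)) (u (n - 2)))
    (hv : ∀ n, 3 ≤ n → v n = F n (v (n - 1)) (v (n - 2)))
    (h1 : u 1 = v 1) (h2 : u 2 = v 2) : ∀ n, 1 ≤ n → u n = v n := by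
  intro n hn
  induction n using Nat.strong_induction_on with
  | _ n ih =>
    match n, hn with
    | 1, _ => exact h1
    | 2, _ => exact h2
    | n + 3, _ =>
      rw [hu _ (by omega), hv _ (by omega)]
      exact congrArg₂ (F (n + 3)) (ih _ (by omega) (by omega)) (ih _ (by omega) (by omega))

def pentagonOdd (k : ℚ) : ℚ :=
  6 / 5 * k ^ 5 + 5 / 2 * k ^ 4 + 1 / 2 * k ^ 3 - k ^ 2 - 1 / 5 * k

def pentagonEven (k : ℚ) : ℚ :=
  6 / 5 * k ^ 5 - 1 / 2 * k ^ 4 - 3 / 2 * k ^ 3 + 1 / 2 * k ^ 2 + 3 / 10 * k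

def pentagonClosedForm (n : ℕ) : ℚ :=
  if Even n then pentagonEven (n / 2 : ℕ) else pentagonOdd (n / 2 : ℕ)

@[simp]
theorem pentagonClosedForm_two_mul (k : ℕ) : pentagonClosedForm (2 * k) = pentagonEven k := by
  simp [pentagonClosedForm]

@[simp]
theorem pentagonClosedForm_two_mul_add_one (k : ℕ) :
    pentagonClosedForm (2 * k + 1) = pentagonOdd k := by
  simp [pentagonClosedForm, show (2 * k + 1) / 2 = k by omega]

theorem pentagonClosedForm_recurrence (f : ℕ → ℚ)
    (hf_odd : ∀ k : ℕ, f (2 * k + 1) = 3 / 2 * (4 * (k : ℚ) ^ 3 - k ^ 2 - k))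
    (hf_even : ∀ k : ℕ, 1 ≤ k → f (2 * k) = 3 / 2 * (4 * (k : ℚ) ^ 3 - 7 * k ^ 2 + 3 * k))
    (n : ℕ) (hn : 3 ≤ n) :
    pentagonClosedForm n =
      2 * pentagonClosedForm (n - 1) - pentagonClosedForm (n - 2) + f n := by
  obtain ⟨k, rfl | rfl⟩ := Nat.even_or_odd' n
  · obtain ⟨j, rfl⟩ : ∃ j, k = j + 2 := ⟨k - 2, by omega⟩
    rw [show 2 * (j + 2) - 1 = 2 * (j + 1) + 1 by omega,
      show 2 * (j + 2) - 2 = 2 * (j + 1) by omega, hf_even _ (by omega)]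
    simp only [pentagonClosedForm_two_mul, pentagonClosedForm_two_mul_add_one, pentagonEven,
      pentagonOdd]
    push_cast
    ring
  · obtain ⟨j, rfl⟩ : ∃ j, k = j + 1 := ⟨k - 1, by omega⟩
    rw [show 2 * (j + 1) + 1 - 1 = 2 * (j + 1) by omega,
      show 2 * (j + 1) + 1 - 2 = 2 * j + 1 by omega, hf_odd]
    simp only [pentagonClosedForm_two_mul, pentagonClosedForm_two_mul_add_one, pentagonEven,
      pentagonOdd]
    push_cast
    ring

/-- with the closed-form inhomogeneous term `f`, the pentagon-counting
sequence `P` satisfying `P n = 2 P (n-1) - P (n-2) + f n`, `P 1 = P 2 = 0`, has the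
stated closed forms. -/
theorem pentagon_P_closed_form (f P : ℕ → ℚ)
    (hf_odd : ∀ k : ℕ, f (2 * k + 1) = 3 / 2 * (4 * (k : ℚ) ^ 3 - k ^ 2 - k))
    (hf_even : ∀ k : ℕ, 1 ≤ k → f (2 * k) = 3 / 2 * (4 * (k : ℚ) ^ 3 - 7 * k ^ 2 + 3 * k))
    (hP1 : P 1 = 0) (hP2 : P 2 = 0)
    (hPrec : ∀ n : ℕ, 3 ≤ n → P n = 2 * P (n - 1) - P (n - 2) + f n) :
    (∀ k : ℕ, P (2 * k + 1) =
      6 / 5 * (k : ℚ) ^ 5 + 5 / 2 * k ^ 4 + 1 / 2 * k ^ 3 - k ^ 2 - 1 / 5 * k) ∧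
    (∀ k : ℕ, 1 ≤ k → P (2 * k) =
      6 / 5 * (k : ℚ) ^ 5 - 1 / 2 * k ^ 4 - 3 / 2 * k ^ 3 + 1 / 2 * k ^ 2 + 3 / 10 * k) := by
  have hP : ∀ n, 1 ≤ n → P n = pentagonClosedForm n :=
    eq_of_two_step_recurrence (fun n a b => 2 * a - b + f n) hPrec
      (pentagonClosedForm_recurrence f hf_odd hf_even)
      (by rw [hP1, show 1 = 2 * 0 + 1 from rfl, pentagonClosedForm_two_mul_add_one]
          norm_num [pentagonOdd])
      (by rw [hP2, show 2 = 2 * 1 from rfl, pentagonClosedForm_two_mul]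
          norm_num [pentagonEven])
  exact ⟨fun k => (hP (2 * k + 1) (by omega)).trans (pentagonClosedForm_two_mul_add_one k),
    fun k hk => (hP (2 * k) (by omega)).trans (pentagonClosedForm_two_mul k)⟩
end

section
/- Let g : ℕ → ℚ be defined by g(2k) = (1/2)k(k−1)(2k² − 2k + 1) for k ≥ 1 and g(2k+1) = k⁴ for k ≥ 0, and let H : ℕ → ℚ satisfy H(1) = 0, H(2) = 0, and H(n) = 2H(n−1) − H(n−2) + g(n) for all n ≥ 3. Then for every k ≥ 1, H(2k) − H(2k−1) = (k/30)(12k⁴ − 15k³ + 5k² − 2) and H(2k+1) − H(2k) = (k/30)(12k⁴ + 15k³ + 5k² − 2). -/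
/-!
The recurrence says that the first differences `H n - H (n - 1)` have increments `g n`.
Grouping the differences in pairs, `H (2k) - H (2k - 1)` grows by `g (2k + 1) + g (2k + 2)`
from `k` to `k + 1`, which telescopes to the stated quintic; adding `g (2k + 1) = k ^ 4`
gives the odd differences.
-/

section Recurrence

variable {g H : ℕ → ℚ}

theorem sub_pred_eq_of_recurrence
    (hHrec : ∀ n : ℕ, 3 ≤ n → H n = 2 * H (n - 1) - H (n - 2) + g n) {n : ℕ} (hn : 3 ≤ n) :
    H n - H (n - 1) = H (n - 1) - H (n - 2) + g n := by
  rw [hHrec n hn]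
  ring

theorem odd_sub_even_eq_of_recurrence
    (hHrec : ∀ n : ℕ, 3 ≤ n → H n = 2 * H (n - 1) - H (n - 2) + g n) {k : ℕ} (hk : 1 ≤ k) :
    H (2 * k + 1) - H (2 * k) = H (2 * k) - H (2 * k - 1) + g (2 * k + 1) := by
  have h := sub_pred_eq_of_recurrence hHrec (n := 2 * k + 1) (by omega)
  rwa [show 2 * k + 1 - 1 = 2 * k by omega, show 2 * k + 1 - 2 = 2 * k - 1 by omega] at h

theorem even_sub_odd_succ_eq_of_recurrence
    (hHrec : ∀ n : ℕ, 3 ≤ n → H n = 2 * H (n - 1) - H (n - 2) + g n) {k : ℕ} (hk : 1 ≤ k) :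
    H (2 * (k + 1)) - H (2 * (k + 1) - 1) = H (2 * k + 1) - H (2 * k) + g (2 * (k + 1)) := by
  have h := sub_pred_eq_of_recurrence hHrec (n := 2 * (k + 1)) (by omega)
  rw [show 2 * (k + 1) - 1 = 2 * k + 1 by omega, show 2 * (k + 1) - 2 = 2 * k by omega] at h
  rwa [show 2 * (k + 1) - 1 = 2 * k + 1 by omega]

end Recurrence

/-- with the closed-form inhomogeneous term `g`, the hexagon-counting
sequence `H` satisfying `H n = 2 H (n-1) - H (n-2) + g n` has the stated
consecutive differences. -/
theorem hexagon_H_differences (g H : ℕ → ℚ)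
    (hg_even : ∀ k : ℕ, 1 ≤ k →
      g (2 * k) = 1 / 2 * (k : ℚ) * ((k : ℚ) - 1) * (2 * (k : ℚ) ^ 2 - 2 * k + 1))
    (hg_odd : ∀ k : ℕ, g (2 * k + 1) = (k : ℚ) ^ 4)
    (hH1 : H 1 = 0) (hH2 : H 2 = 0)
    (hHrec : ∀ n : ℕ, 3 ≤ n → H n = 2 * H (n - 1) - H (n - 2) + g n) :
    (∀ k : ℕ, 1 ≤ k →
      H (2 * k) - H (2 * k - 1) =
        (k : ℚ) / 30 * (12 * (k : ℚ) ^ 4 - 15 * k ^ 3 + 5 * k ^ 2 - 2)) ∧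
    (∀ k : ℕ, 1 ≤ k →
      H (2 * k + 1) - H (2 * k) =
        (k : ℚ) / 30 * (12 * (k : ℚ) ^ 4 + 15 * k ^ 3 + 5 * k ^ 2 - 2)) := by
  have heven : ∀ k : ℕ, 1 ≤ k →
      H (2 * k) - H (2 * k - 1) =
        (k : ℚ) / 30 * (12 * (k : ℚ) ^ 4 - 15 * k ^ 3 + 5 * k ^ 2 - 2) := by
    intro k hk
    induction k, hk using Nat.le_induction with
    | base => norm_num [hH1, hH2]
    | succ k hk ih =>
      rw [even_sub_odd_succ_eq_of_recurrence hHrec hk, odd_sub_even_eq_of_recurrence hHrec hk,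
        ih, hg_odd, hg_even (k + 1) (by omega)]
      push_cast
      ring
  refine ⟨heven, fun k hk => ?_⟩
  rw [odd_sub_even_eq_of_recurrence hHrec hk, heven k hk, hg_odd]
  ring
end

section
/- Let g : ℕ → ℚ be defined by g(2k) = (1/2)k(k−1)(2k² − 2k + 1) for k ≥ 1 and g(2k+1) = k⁴ for k ≥ 0, and let H : ℕ → ℚ satisfy H(1) = 0, H(2) = 0, and H(n) = 2H(n−1) − H(n−2) + g(n) for all n ≥ 3. Then for every k ≥ 0, H(2k+1) = (1/60)(8k⁶ + 24k⁵ + 25k⁴ + 10k³ − 3k² − 4k), and for every k ≥ 1, H(2k) = (1/60)(8k⁶ − 5k⁴ − 3k²). -/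
/-!
A second-order recurrence is determined by its two initial values, so it suffices to check
that the claimed odd and even polynomials vanish at the start and satisfy the recurrence at
each parity of the step. With `g(2k+1) = k⁴` and `g(2k)` polynomial in `k`, both checks are
polynomial identities in `k`.
-/

theorem eq_of_interleaved_recurrence {R : Type*} [Ring R] {g H O E : ℕ → R}
    (hrec : ∀ n, 1 ≤ n → H (n + 2) = 2 * H (n + 1) - H n + g (n + 2))
    (hO : ∀ k, O (k + 1) = 2 * E (k + 1) - O k + g (2 * k + 3))
    (hE : ∀ k, E (k + 2) = 2 * O (k + 1) - E (k + 1) + g (2 * k + 4))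
    (h1 : H 1 = O 0) (h2 : H 2 = E 1) (k : ℕ) :
    H (2 * k + 1) = O k ∧ H (2 * k + 2) = E (k + 1) := by
  induction k with
  | zero => exact ⟨h1, h2⟩
  | succ k ih =>
    have hodd : H (2 * k + 3) = O (k + 1) := by
      rw [hO, ← ih.1, ← ih.2]
      exact hrec (2 * k + 1) (by omega)
    have heven : H (2 * k + 4) = E (k + 2) := by
      rw [hE, ← hodd, ← ih.2]
      exact hrec (2 * k + 2) (by omega)
    exact ⟨hodd, heven⟩

def hexagonOdd (k : ℚ) : ℚ :=
  1 / 60 * (8 * k ^ 6 + 24 * k ^ 5 + 25 * k ^ 4 + 10 * k ^ 3 - 3 * k ^ 2 - 4 * k)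

def hexagonEven (k : ℚ) : ℚ :=
  1 / 60 * (8 * k ^ 6 - 5 * k ^ 4 - 3 * k ^ 2)

theorem hexagonOdd_add_one (k : ℚ) :
    hexagonOdd (k + 1) = 2 * hexagonEven (k + 1) - hexagonOdd k + (k + 1) ^ 4 := by
  unfold hexagonOdd hexagonEven
  ring

theorem hexagonEven_add_two (k : ℚ) :
    hexagonEven (k + 2) = 2 * hexagonOdd (k + 1) - hexagonEven (k + 1) +
      1 / 2 * (k + 2) * (k + 2 - 1) * (2 * (k + 2) ^ 2 - 2 * (k + 2) + 1) := by
  unfold hexagonOdd hexagonEven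
  ring

/-- with the closed-form inhomogeneous term `g`, the hexagon-counting
sequence `H` satisfying `H n = 2 H (n-1) - H (n-2) + g n`, `H 1 = H 2 = 0`, has the
stated closed forms. -/
theorem hexagon_H_closed_form (g H : ℕ → ℚ)
    (hg_even : ∀ k : ℕ, 1 ≤ k →
      g (2 * k) = 1 / 2 * (k : ℚ) * ((k : ℚ) - 1) * (2 * (k : ℚ) ^ 2 - 2 * k + 1))
    (hg_odd : ∀ k : ℕ, g (2 * k + 1) = (k : ℚ) ^ 4)
    (hH1 : H 1 = 0) (hH2 : H 2 = 0)
    (hHrec : ∀ n : ℕ, 3 ≤ n → H n = 2 * H (n - 1) - H (n - 2) + g n) :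
    (∀ k : ℕ, H (2 * k + 1) = 1 / 60 *
      (8 * (k : ℚ) ^ 6 + 24 * k ^ 5 + 25 * k ^ 4 + 10 * k ^ 3 - 3 * k ^ 2 - 4 * k)) ∧
    (∀ k : ℕ, 1 ≤ k → H (2 * k) = 1 / 60 *
      (8 * (k : ℚ) ^ 6 - 5 * k ^ 4 - 3 * k ^ 2)) := by
  have closed := eq_of_interleaved_recurrence (g := g) (H := H)
    (O := fun k => hexagonOdd k) (E := fun k => hexagonEven k)
    (fun n hn => by simpa using hHrec (n + 2) (by omega))
    (fun k => by
      have := hg_odd (k + 1)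
      push_cast at this ⊢
      rw [show 2 * k + 3 = 2 * (k + 1) + 1 by ring, this, hexagonOdd_add_one])
    (fun k => by
      have := hg_even (k + 2) (by omega)
      push_cast at this ⊢
      rw [show 2 * k + 4 = 2 * (k + 2) by ring, this, hexagonEven_add_two])
    (by simp [hH1, hexagonOdd]) (by norm_num [hH2, hexagonEven])
  refine ⟨fun k => (closed k).1, fun k hk => ?_⟩
  obtain ⟨m, rfl⟩ := Nat.exists_eq_add_of_le' hk
  simpa [mul_add, hexagonEven] using (closed m).2
end
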